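/- For any graph G and any clique cover C_1,...,C_k of G, the matrix X = kI + A − J with A = Σ_{l=1}^k k·1_{C_l}1_{C_l}^T − kI satisfies X = (1/k)Σ_{l=1}^k (k·1_{C_l} − e)(k·1_{C_l} − e)^T; in particular X is positive semidefinite and (t,A) = (k,A) is feasible for the Lovász theta SDP, so ϑ(G) ≤ χ̄(G) (the clique cover number). -/

import Mathlib

open Matrix Finset

/-- Indicator function of a finite set. -/
def indFun {V : Type*} [DecidableEq V] (s : Finset V) : V → ℝ :=
  fun v => if v ∈ s then (1 : ℝ) else 0

/-- The feasible values of the Lovász theta SDP for a graph `G`. -/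
def thetaFeas {V : Type*} [Fintype V] [DecidableEq V] (G : SimpleGraph V) : Set ℝ :=
  {t : ℝ | ∃ A : Matrix V V ℝ, A.IsSymm ∧ (∀ i : V, A i i = 0) ∧
    (∀ i j : V, ¬ G.Adj i j → A i j = 0) ∧
    (t • (1 : Matrix V V ℝ) + A - Matrix.of fun _ _ => (1 : ℝ)).PosSemidef}

/-!
Every vertex lies in exactly one clique `C_l`, so the indicators `1_{C_l}` sum to `e`.
Expanding `Σ_l (k 1_{C_l} − e)(k 1_{C_l} − e)ᵀ` then gives `k² Σ_l 1_{C_l} 1_{C_l}ᵀ − k J = k X`,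
so `X` is a positive multiple of a sum of rank-one Gram matrices, hence positive semidefinite.
The weight matrix `A` has entries `k · #{l | i, j ∈ C_l} − k [i = j]`; they vanish on the
diagonal (one clique per vertex) and at non-adjacent pairs `i ≠ j` (no clique contains both),
so `k` is feasible.
-/

section

variable {V ι : Type*}

theorem indFun_mul_self [DecidableEq V] (s : Finset V) (v : V) :
    indFun s v * indFun s v = indFun s v := by
  unfold indFun; split_ifs <;> norm_num

theorem indFun_mul_indFun_eq_zero [DecidableEq V] {s : Finset V} {i j : V}
    (h : ¬(i ∈ s ∧ j ∈ s)) : indFun s i * indFun s j = 0 := by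
  unfold indFun; split_ifs <;> simp_all

theorem sum_indFun_eq_one [DecidableEq V] [Fintype ι] {C : ι → Finset V}
    (hdisj : ∀ i j, i ≠ j → Disjoint (C i) (C j)) (hcover : ∀ v, ∃ l, v ∈ C l) (v : V) :
    ∑ l, indFun (C l) v = 1 := by
  obtain ⟨l₀, hl₀⟩ := hcover v
  rw [sum_eq_single_of_mem l₀ (mem_univ _) fun l _ hl => ?_]
  · exact if_pos hl₀
  · exact if_neg fun hv => disjoint_left.1 (hdisj l l₀ hl) hv hl₀

theorem sum_vecMulVec_mul_sub_one [Fintype ι] {x : ι → V → ℝ} (hx : ∀ v, ∑ l, x l v = 1)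
    (c : ℝ) :
    ∑ l, vecMulVec (fun v => c * x l v - 1) (fun v => c * x l v - 1)
      = c ^ 2 • ∑ l, vecMulVec (x l) (x l)
        + ((Fintype.card ι : ℝ) - 2 * c) • of fun _ _ => (1 : ℝ) := by
  ext i j
  have expand (l : ι) : (c * x l i - 1) * (c * x l j - 1)
      = c ^ 2 * (x l i * x l j) - c * x l i - c * x l j + 1 := by ring
  simp only [Matrix.sum_apply, Matrix.add_apply, Matrix.smul_apply, vecMulVec_apply, of_apply,
    smul_eq_mul, expand, sum_add_distrib, sum_sub_distrib, ← mul_sum, hx, sum_const, card_univ,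
    nsmul_eq_mul]
  ring

theorem inv_smul_sum_vecMulVec_mul_sub_one {k : ℕ} (hk : k ≠ 0) {x : Fin k → V → ℝ}
    (hx : ∀ v, ∑ l, x l v = 1) :
    (k : ℝ)⁻¹ • ∑ l, vecMulVec (fun v => (k : ℝ) * x l v - 1) (fun v => (k : ℝ) * x l v - 1)
      = ∑ l, (k : ℝ) • vecMulVec (x l) (x l) - of fun _ _ => (1 : ℝ) := by
  have hk' : (k : ℝ) ≠ 0 := Nat.cast_ne_zero.2 hk
  rw [sum_vecMulVec_mul_sub_one hx, Fintype.card_fin, ← smul_sum]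
  match_scalars
  · field_simp
  · field_simp
    ring

theorem posSemidef_sum_vecMulVec_self [Fintype V] [Fintype ι] (w : ι → V → ℝ) :
    (∑ l, vecMulVec (w l) (w l)).PosSemidef :=
  posSemidef_sum _ fun l _ => by
    simpa only [star_trivial] using posSemidef_vecMulVec_self_star (w l)

theorem isSymm_sum_smul_vecMulVec_self_sub_smul_one [DecidableEq V] [Fintype V] [Fintype ι]
    (c : ℝ) (x : ι → V → ℝ) :
    (∑ l, c • vecMulVec (x l) (x l) - c • (1 : Matrix V V ℝ)).IsSymm := by
  simp [IsSymm, transpose_sum, transpose_vecMulVec]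

theorem sum_smul_vecMulVec_indFun_sub_smul_one_apply_self [DecidableEq V] [Fintype V]
    [Fintype ι] {C : ι → Finset V} (hC : ∀ v, ∑ l, indFun (C l) v = 1) (c : ℝ) (v : V) :
    (∑ l, c • vecMulVec (indFun (C l)) (indFun (C l)) - c • (1 : Matrix V V ℝ)) v v = 0 := by
  simp only [Matrix.sub_apply, Matrix.sum_apply, Matrix.smul_apply, vecMulVec_apply,
    indFun_mul_self, one_apply_eq, smul_eq_mul, ← mul_sum, hC, sub_self]

theorem sum_smul_vecMulVec_indFun_sub_smul_one_apply_of_not_adj [DecidableEq V] [Fintype V]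
    [Fintype ι] {G : SimpleGraph V} {C : ι → Finset V}
    (hclique : ∀ l, G.IsClique (C l : Set V)) (hC : ∀ v, ∑ l, indFun (C l) v = 1) (c : ℝ)
    {i j : V} (hij : ¬G.Adj i j) :
    (∑ l, c • vecMulVec (indFun (C l)) (indFun (C l)) - c • (1 : Matrix V V ℝ)) i j = 0 := by
  obtain rfl | hne := eq_or_ne i j
  · exact sum_smul_vecMulVec_indFun_sub_smul_one_apply_self hC c i
  have hzero (l : ι) : indFun (C l) i * indFun (C l) j = 0 :=
    indFun_mul_indFun_eq_zero fun ⟨hi, hj⟩ => hij (hclique l hi hj hne)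
  simp [Matrix.sum_apply, vecMulVec_apply, one_apply_ne hne, hzero]

end

theorem Real.sInf_le_of_mem_of_nonneg {s : Set ℝ} {a : ℝ} (ha : a ∈ s) (h0 : 0 ≤ a) :
    sInf s ≤ a := by
  classical
  exact dite _ (fun h => csInf_le h ha) fun h => (Real.sInf_of_not_bddBelow h).trans_le h0

theorem stmt19_general {V : Type*} [Fintype V] [DecidableEq V] {k : ℕ} (hk : 0 < k)
    (G : SimpleGraph V)
    (C : Fin k → Finset V)
    -- C_1, ..., C_k is a clique cover of G: a partition of V into cliques
    (hdisj : ∀ i j : Fin k, i ≠ j → Disjoint (C i) (C j))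
    (hcover : ∀ v : V, ∃ l : Fin k, v ∈ C l)
    (hclique : ∀ l : Fin k, G.IsClique (C l : Set V)) :
    -- with A = Σ_l k·1_{C_l}1_{C_l}ᵀ − kI and X = kI + A − J:
    ((k : ℝ) • (1 : Matrix V V ℝ)
        + ((∑ l : Fin k, (k : ℝ) • Matrix.vecMulVec (indFun (C l)) (indFun (C l)))
            - (k : ℝ) • (1 : Matrix V V ℝ))
        - Matrix.of fun _ _ => (1 : ℝ))
      = (k : ℝ)⁻¹ • ∑ l : Fin k,
          Matrix.vecMulVec (fun v => (k : ℝ) * indFun (C l) v - 1)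
            (fun v => (k : ℝ) * indFun (C l) v - 1)
    ∧ ((k : ℝ) • (1 : Matrix V V ℝ)
        + ((∑ l : Fin k, (k : ℝ) • Matrix.vecMulVec (indFun (C l)) (indFun (C l)))
            - (k : ℝ) • (1 : Matrix V V ℝ))
        - Matrix.of fun _ _ => (1 : ℝ)).PosSemidef
    ∧ (k : ℝ) ∈ thetaFeas G
    ∧ sInf (thetaFeas G) ≤ (k : ℝ) := by
  have hpart := sum_indFun_eq_one hdisj hcover
  have hX : (k : ℝ) • (1 : Matrix V V ℝ)
        + ((∑ l : Fin k, (k : ℝ) • vecMulVec (indFun (C l)) (indFun (C l)))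
            - (k : ℝ) • (1 : Matrix V V ℝ))
        - (of fun _ _ => (1 : ℝ))
      = (k : ℝ)⁻¹ • ∑ l : Fin k,
          vecMulVec (fun v => (k : ℝ) * indFun (C l) v - 1)
            (fun v => (k : ℝ) * indFun (C l) v - 1) := by
    rw [inv_smul_sum_vecMulVec_mul_sub_one hk.ne' hpart]
    abel
  have hpsd : ((k : ℝ)⁻¹ • ∑ l : Fin k, vecMulVec (fun v => (k : ℝ) * indFun (C l) v - 1)
      (fun v => (k : ℝ) * indFun (C l) v - 1)).PosSemidef :=
    (posSemidef_sum_vecMulVec_self _).smul (by positivity)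
  have hfeas : (k : ℝ) ∈ thetaFeas G :=
    ⟨_, isSymm_sum_smul_vecMulVec_self_sub_smul_one _ _,
      sum_smul_vecMulVec_indFun_sub_smul_one_apply_self hpart _,
      fun _ _ => sum_smul_vecMulVec_indFun_sub_smul_one_apply_of_not_adj hclique hpart _,
      hX ▸ hpsd⟩
  exact ⟨hX, hX ▸ hpsd, hfeas, Real.sInf_le_of_mem_of_nonneg hfeas k.cast_nonneg⟩

theorem stmt19 {V : Type*} [Fintype V] [DecidableEq V] {k : ℕ} (hk : 0 < k)
    (G : SimpleGraph V)
    (C : Fin k → Finset V)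
    -- C_1, ..., C_k is a clique cover of G: a partition of V into cliques
    (hdisj : ∀ i j : Fin k, i ≠ j → Disjoint (C i) (C j))
    (hcover : ∀ v : V, ∃ l : Fin k, v ∈ C l)
    (hne : ∀ l : Fin k, (C l).Nonempty)
    (hclique : ∀ l : Fin k, G.IsClique (C l : Set V)) :
    -- with A = Σ_l k·1_{C_l}1_{C_l}ᵀ − kI and X = kI + A − J:
    ((k : ℝ) • (1 : Matrix V V ℝ)
        + ((∑ l : Fin k, (k : ℝ) • Matrix.vecMulVec (indFun (C l)) (indFun (C l)))
            - (k : ℝ) • (1 : Matrix V V ℝ))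
        - Matrix.of fun _ _ => (1 : ℝ))
      = (k : ℝ)⁻¹ • ∑ l : Fin k,
          Matrix.vecMulVec (fun v => (k : ℝ) * indFun (C l) v - 1)
            (fun v => (k : ℝ) * indFun (C l) v - 1)
    ∧ ((k : ℝ) • (1 : Matrix V V ℝ)
        + ((∑ l : Fin k, (k : ℝ) • Matrix.vecMulVec (indFun (C l)) (indFun (C l)))
            - (k : ℝ) • (1 : Matrix V V ℝ))
        - Matrix.of fun _ _ => (1 : ℝ)).PosSemidef
    ∧ (k : ℝ) ∈ thetaFeas G
    ∧ sInf (thetaFeas G) ≤ (k : ℝ) :=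
  stmt19_general hk G C hdisj hcover hclique
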